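/- Suppose P_T = P_Tᵀ solves the GARE AᵀP_T + P_TA + Q_T - P_TB R_T⁻¹ Bᵀ P_T + (1/γ_T²)P_T D Dᵀ P_T = 0 with K_T = R_T⁻¹BᵀP_T. Let R_o = R_T - R with R symmetric positive definite, and suppose P_o, Q_o satisfy BᵀP_o = R_o R_T⁻¹ Bᵀ P_T and Q_o + AᵀP_o + P_oA - K_TᵀR_oK_T + (1/γ_T²)P_T D DᵀP_T - (1/γ²)P* D Dᵀ P* = 0, where P* = P_T - P_o and Q* = Q_T - Q_o. Then P*, Q* satisfy the GARE AᵀP* + P*A + Q* - P*BR⁻¹BᵀP* + (1/γ²)P*DDᵀP* = 0 and R⁻¹BᵀP* = K_T. -/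
import Mathlib


open Matrix

theorem stmt_7 {n m z : ℕ}
    (A : Matrix (Fin n) (Fin n) ℝ) (B : Matrix (Fin n) (Fin m) ℝ)
    (D : Matrix (Fin n) (Fin z) ℝ)
    (QT PT Po Qo Pstar Qstar : Matrix (Fin n) (Fin n) ℝ)
    (hQT : QT.IsSymm) (hPT : PT.IsSymm) (hPo : Po.IsSymm) (hQo : Qo.IsSymm)
    (RT R : Matrix (Fin m) (Fin m) ℝ) (hRT : RT.PosDef) (hR : R.PosDef)
    (γT γ : ℝ) (hγT : 0 < γT) (hγ : 0 < γ)
    (KT : Matrix (Fin m) (Fin n) ℝ) (hKT : KT = RT⁻¹ * Bᵀ * PT)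
    (Ro : Matrix (Fin m) (Fin m) ℝ) (hRo : Ro = RT - R)
    (hPstar : Pstar = PT - Po) (hQstar : Qstar = QT - Qo)
    (hGARE : Aᵀ * PT + PT * A + QT - PT * B * RT⁻¹ * Bᵀ * PT
        + (1 / γT ^ 2) • (PT * D * Dᵀ * PT) = 0)
    (h1 : Bᵀ * Po = Ro * RT⁻¹ * Bᵀ * PT)
    (h2 : Qo + Aᵀ * Po + Po * A - KTᵀ * Ro * KT
        + (1 / γT ^ 2) • (PT * D * Dᵀ * PT) - (1 / γ ^ 2) • (Pstar * D * Dᵀ * Pstar) = 0) :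
    Aᵀ * Pstar + Pstar * A + Qstar - Pstar * B * R⁻¹ * Bᵀ * Pstar
      + (1 / γ ^ 2) • (Pstar * D * Dᵀ * Pstar) = 0 ∧
    R⁻¹ * Bᵀ * Pstar = KT := by
  have hRTd : IsUnit RT.det := isUnit_iff_ne_zero.mpr hRT.det_pos.ne'
  have hRd : IsUnit R.det := isUnit_iff_ne_zero.mpr hR.det_pos.ne'
  have hRTinv : RT * RT⁻¹ = 1 := Matrix.mul_nonsing_inv RT hRTd
  have hRinv : R⁻¹ * R = 1 := Matrix.nonsing_inv_mul R hRd
  have hRTt : RTᵀ = RT := hRT.isHermitian.eq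
  have hRt : Rᵀ = R := hR.isHermitian.eq
  have hRTit : (RT⁻¹)ᵀ = RT⁻¹ := by rw [Matrix.transpose_nonsing_inv, hRTt]
  have hPTt : PTᵀ = PT := hPT
  have hPstart : Pstarᵀ = Pstar := by
    rw [hPstar, Matrix.transpose_sub, hPT, hPo]
  -- Bᵀ * Pstar = R * RT⁻¹ * Bᵀ * PT
  have hBP : Bᵀ * Pstar = R * RT⁻¹ * (Bᵀ * PT) := by
    rw [hPstar, Matrix.mul_sub, h1, hRo]
    simp only [Matrix.sub_mul, Matrix.mul_assoc, Matrix.mul_sub]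
    rw [← Matrix.mul_assoc RT RT⁻¹, hRTinv, Matrix.one_mul]
    abel
  have hgoal2 : R⁻¹ * Bᵀ * Pstar = KT := by
    rw [Matrix.mul_assoc, hBP, hKT]
    simp only [← Matrix.mul_assoc]
    rw [hRinv, Matrix.one_mul]
  -- Bᵀ * PT = RT * KT
  have hBPT : Bᵀ * PT = RT * KT := by
    rw [hKT, ← Matrix.mul_assoc, ← Matrix.mul_assoc, hRTinv, Matrix.one_mul]
  -- key quartic identity
  have hkey : Pstar * B * R⁻¹ * Bᵀ * Pstar
      = PT * B * RT⁻¹ * Bᵀ * PT - KTᵀ * Ro * KT := by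
    have hPsB : Pstar * B = PT * B * RT⁻¹ * R := by
      have h := congrArg Matrix.transpose hBP
      simpa [Matrix.transpose_mul, hPstart, hPTt, hRTit, hRt, ← Matrix.mul_assoc] using h
    have hKTt : KTᵀ = PT * B * RT⁻¹ := by
      rw [hKT, Matrix.transpose_mul, Matrix.transpose_mul, hRTit, hPTt,
        Matrix.transpose_transpose, Matrix.mul_assoc]
    have step : Pstar * B * R⁻¹ * Bᵀ * Pstar = PT * B * RT⁻¹ * (R * KT) := by
      rw [Matrix.mul_assoc, Matrix.mul_assoc, ← Matrix.mul_assoc R⁻¹ Bᵀ Pstar,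
        hgoal2, hPsB, Matrix.mul_assoc]
    rw [step, hRo, show R = RT - (RT - R) by abel, Matrix.sub_mul, Matrix.mul_sub,
      ← hBPT, hKTt]
    simp only [← Matrix.mul_assoc]
    rw [sub_sub_cancel]
  refine ⟨?_, hgoal2⟩
  have hmain : Aᵀ * Pstar + Pstar * A + Qstar - Pstar * B * R⁻¹ * Bᵀ * Pstar
      + (1 / γ ^ 2) • (Pstar * D * Dᵀ * Pstar)
      = (Aᵀ * PT + PT * A + QT - PT * B * RT⁻¹ * Bᵀ * PT
          + (1 / γT ^ 2) • (PT * D * Dᵀ * PT))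
        - (Qo + Aᵀ * Po + Po * A - KTᵀ * Ro * KT
          + (1 / γT ^ 2) • (PT * D * Dᵀ * PT)
          - (1 / γ ^ 2) • (Pstar * D * Dᵀ * Pstar)) := by
    rw [hkey, hQstar, show Aᵀ * Pstar = Aᵀ * PT - Aᵀ * Po by rw [hPstar, Matrix.mul_sub],
      show Pstar * A = PT * A - Po * A by rw [hPstar, Matrix.sub_mul]]
    abel
  rw [hmain, hGARE, h2, sub_zero]
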